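/- arXiv:2201.12359 — 2 statements merged into one kernel-verified Lean document; each statement's English description precedes it below -/
import Mathlib

section
/- Let N ≥ 1 be an integer, p a real parameter, d an integer with 0 ≤ d ≤ N, and n an integer with n > N and n ≠ d. Then, as an identity of real polynomials in x, K̂_n^{(1,d)}(x;p,N) = (x−N+1)_N · K̂_{n−N−1}^{(2,d)}(x−N−1;p,−N−2), where (x−N+1)_N = (x−N+1)(x−N+2)⋯x. -/
open Polynomial

/-- Pochhammer symbol `(c)_k = c (c+1) ⋯ (c+k−1)`. -/
noncomputable def poch (c : ℝ) (k : ℕ) : ℝ := ∏ i ∈ Finset.range k, (c + i)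

/-- The monic Krawtchouk polynomial
`K_n(x;p,a) = Σ_{j=0}^{n} ((−n)_j (−a+j)_{n−j} / j!) p^{n−j} (−x)_j`,
where `(−x)_j = Π_{i=0}^{j−1} (i − x)` as a polynomial in `x`. -/
noncomputable def kraw (n : ℕ) (p a : ℝ) : Polynomial ℝ :=
  ∑ j ∈ Finset.range (n + 1),
    Polynomial.C (poch (-(n : ℝ)) j * poch (-a + j) (n - j) / (Nat.factorial j) * p ^ (n - j)) *
      ∏ i ∈ Finset.range j, (Polynomial.C (i : ℝ) - Polynomial.X)

/-- The type-1 exceptional Krawtchouk polynomial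
`K̂_n^{(1,d)}(x;p,N) = (K_d(x;p,N) K_n(x+1;p,N) − K_d(x+1;p,N) K_n(x;p,N))/(n−d)`. -/
noncomputable def xkraw1 (d n : ℕ) (p N : ℝ) : Polynomial ℝ :=
  Polynomial.C (1 / ((n : ℝ) - (d : ℝ))) *
    (kraw d p N * (kraw n p N).comp (Polynomial.X + 1) -
      (kraw d p N).comp (Polynomial.X + 1) * kraw n p N)

/-- The type-2 exceptional Krawtchouk polynomial
`K̂_n^{(2,d)}(x;p,M) = [(M−x) K_d(x−M−1;p,−M−2) K_n(x+1;p,M)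
  + (x+1) K_d(x−M;p,−M−2) K_n(x;p,M)]/(M+d+1−n)`. -/
noncomputable def xkraw2 (d n : ℕ) (p M : ℝ) : Polynomial ℝ :=
  Polynomial.C (1 / (M + (d : ℝ) + 1 - (n : ℝ))) *
    ((Polynomial.C M - Polynomial.X) *
        (kraw d p (-M - 2)).comp (Polynomial.X - Polynomial.C (M + 1)) *
        (kraw n p M).comp (Polynomial.X + 1) +
      (Polynomial.X + 1) * (kraw d p (-M - 2)).comp (Polynomial.X - Polynomial.C M) *
        kraw n p M)

lemma poch_succ (c : ℝ) (k : ℕ) : poch c (k+1) = poch c k * (c + k) :=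
  Finset.prod_range_succ _ _

lemma poch_eq_zero {c : ℝ} {k : ℕ} (i : ℕ) (hi : i < k) (h : c + i = 0) : poch c k = 0 :=
  Finset.prod_eq_zero (Finset.mem_range.mpr hi) h

lemma poch_neg_nat (a : ℕ) : ∀ k, k ≤ a →
    poch (-(a:ℝ)) k * ((a-k).factorial : ℝ) = (-1)^k * a.factorial := by
  intro k
  induction k with
  | zero => intro _; simp [poch]
  | succ k ih =>
    intro h
    have hk : k ≤ a := Nat.le_of_succ_le h
    have h1 : (a - k) = (a - (k+1)) + 1 := by omega
    have hc : ((a - (k+1) : ℕ):ℝ) = (a:ℝ) - k - 1 := by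
      have := Nat.cast_sub h (R := ℝ); push_cast at this ⊢; linarith
    have key := ih hk
    rw [h1, Nat.factorial_succ] at key
    push_cast [hc] at key
    rw [poch_succ]
    push_cast
    linear_combination (-1 : ℝ) * key

lemma poch_pos_nat (b : ℕ) : ∀ k, poch ((b:ℝ)+1) k * (b.factorial : ℝ) = ((b+k).factorial : ℝ) := by
  intro k
  induction k with
  | zero => simp [poch]
  | succ k ih =>
    rw [poch_succ, show b + (k+1) = (b+k)+1 from rfl, Nat.factorial_succ]
    push_cast
    linear_combination ((b:ℝ) + 1 + k) * ih

lemma fact_ne (j : ℕ) : ((j.factorial : ℝ)) ≠ 0 := by positivity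

lemma coeff_eq (N m k : ℕ) (hk : k ≤ m) :
    poch (-((N:ℝ)+1+m)) (N+1+k) * poch ((k:ℝ)+1) (m-k) / (Nat.factorial (N+1+k))
    = (-1:ℝ)^(N+1) *
      (poch (-(m:ℝ)) k * poch ((N:ℝ)+2+k) (m-k) / (Nat.factorial k)) := by
  have e1 := poch_neg_nat (N+1+m) (N+1+k) (by omega)
  rw [show (N+1+m) - (N+1+k) = m - k by omega] at e1
  have hcast : -(((N+1+m : ℕ)):ℝ) = -((N:ℝ)+1+m) := by push_cast; ring
  rw [hcast] at e1
  have e2 := poch_pos_nat k (m-k)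
  rw [show k + (m-k) = m by omega] at e2
  have e3 := poch_neg_nat m k hk
  have e4 := poch_pos_nat (N+1+k) (m-k)
  rw [show (N+1+k) + (m-k) = N+1+m by omega] at e4
  have hc4 : ((N+1+k : ℕ):ℝ) + 1 = (N:ℝ)+2+k := by push_cast; ring
  rw [hc4] at e4
  have h1 := fact_ne (m-k); have h2 := fact_ne k; have h3 := fact_ne (N+1+k)
  have p1 : poch (-((N:ℝ)+1+m)) (N+1+k) = (-1)^(N+1+k) * ((N+1+m).factorial : ℝ) / ((m-k).factorial : ℝ) := by
    field_simp at e1 ⊢; linarith [e1]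
  have p2 : poch ((k:ℝ)+1) (m-k) = ((m).factorial : ℝ) / (k.factorial : ℝ) := by
    field_simp; linarith [e2]
  have p3 : poch (-(m:ℝ)) k = (-1)^k * ((m).factorial : ℝ) / ((m-k).factorial : ℝ) := by
    field_simp; linarith [e3]
  have p4 : poch ((N:ℝ)+2+k) (m-k) = (((N+1+m)).factorial : ℝ) / ((N+1+k).factorial : ℝ) := by
    field_simp; linarith [e4]
  rw [p1, p2, p3, p4, pow_add]
  field_simp

lemma eval_kraw (n : ℕ) (p a x : ℝ) :
    (kraw n p a).eval x =
      ∑ j ∈ Finset.range (n + 1),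
        poch (-(n : ℝ)) j * poch (-a + j) (n - j) / (Nat.factorial j) * p ^ (n - j) *
          ∏ i ∈ Finset.range j, ((i:ℝ) - x) := by
  simp [kraw, eval_finset_sum, eval_prod]

lemma eval_kraw_factor (N m : ℕ) (p x : ℝ) :
    (kraw (N+1+m) p (N:ℝ)).eval x =
      (∏ i ∈ Finset.range (N+1), (x - (i:ℝ))) *
        (kraw m p (-(N:ℝ)-2)).eval (x - ((N:ℝ)+1)) := by
  rw [eval_kraw, eval_kraw,
    show N+1+m+1 = (N+1)+(m+1) by ring, Finset.sum_range_add]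
  have hz : ∀ j ∈ Finset.range (N+1),
      poch (-((N+1+m : ℕ) : ℝ)) j * poch (-(N:ℝ) + j) ((N+1+m) - j) / (Nat.factorial j)
        * p ^ ((N+1+m) - j) * ∏ i ∈ Finset.range j, ((i:ℝ) - x) = 0 := by
    intro j hj
    rw [Finset.mem_range] at hj
    have hjN : j ≤ N := by omega
    have : poch (-(N:ℝ) + j) ((N+1+m) - j) = 0 := by
      apply poch_eq_zero (N - j) (by omega)
      have := Nat.cast_sub hjN (R := ℝ)
      push_cast at this ⊢
      linarith
    rw [this]; ring
  rw [Finset.sum_eq_zero hz, zero_add, Finset.mul_sum]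
  apply Finset.sum_congr rfl
  intro k hk
  rw [Finset.mem_range] at hk
  have hkm : k ≤ m := by omega
  -- product split
  rw [show N+1+k = (N+1)+k from rfl] at *
  rw [Finset.prod_range_add (fun i => (i:ℝ) - x) (N+1) k]
  have hneg : ∏ i ∈ Finset.range (N+1), ((i:ℝ) - x)
      = (-1:ℝ)^(N+1) * ∏ i ∈ Finset.range (N+1), (x - (i:ℝ)) := by
    rw [show ((-1:ℝ)^(N+1)) = ∏ _i ∈ Finset.range (N+1), (-1:ℝ) by simp,
      ← Finset.prod_mul_distrib]
    exact Finset.prod_congr rfl (fun i _ => by ring)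
  have hshift : (∏ i ∈ Finset.range k, ((((N+1+i : ℕ)):ℝ) - x))
      = ∏ i ∈ Finset.range k, ((i:ℝ) - (x - ((N:ℝ)+1))) := by
    apply Finset.prod_congr rfl
    intro i _; push_cast; ring
  have hsub : (N+1+m) - ((N+1)+k) = m - k := by omega
  have hcast : (((N+1+m : ℕ)):ℝ) = (N:ℝ)+1+m := by push_cast; ring
  have hcast2 : -(N:ℝ) + (((N+1)+k : ℕ) : ℝ) = (k:ℝ)+1 := by push_cast; ring
  have hcast3 : -(-(N:ℝ)-2) + (k:ℝ) = (N:ℝ)+2+k := by ring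
  rw [hsub, hcast, hcast2, hcast3]
  rw [coeff_eq N m k hkm]
  rw [hneg]
  rw [hshift]
  have hsq : ((-1:ℝ)^(N+1)) * ((-1:ℝ)^(N+1)) = 1 := by
    rw [← pow_add]; exact Even.neg_one_pow ⟨N+1, by ring⟩
  linear_combination (poch (-(m:ℝ)) k * poch ((N:ℝ)+2+k) (m-k) / (Nat.factorial k) * p^(m-k) *
    (∏ i ∈ Finset.range (N+1), (x-(i:ℝ))) *
    (∏ i ∈ Finset.range k, ((i:ℝ) - (x - ((N:ℝ)+1))))) * hsq

/-- The Diophantine property relating the type-1 and type-2 exceptional Krawtchouk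
polynomials: for `n > N`, `n ≠ d`,
`K̂_n^{(1,d)}(x;p,N) = (x−N+1)_N K̂_{n−N−1}^{(2,d)}(x−N−1;p,−N−2)`. -/
theorem krawtchouk_exceptional_diophantine_1_2 (N : ℕ) (hN : 1 ≤ N) (p : ℝ)
    (d : ℕ) (hd : d ≤ N) (n : ℕ) (hn : N < n) (hnd : n ≠ d) :
    xkraw1 d n p (N : ℝ) =
      (∏ i ∈ Finset.range N, (Polynomial.X - Polynomial.C ((N : ℝ) - 1 - i))) *
        (xkraw2 d (n - N - 1) p (-(N : ℝ) - 2)).comp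
          (Polynomial.X - Polynomial.C ((N : ℝ) + 1)) := by
  obtain ⟨m, rfl⟩ : ∃ m, n = N + 1 + m := ⟨n - N - 1, by omega⟩
  rw [show N + 1 + m - N - 1 = m by omega]
  apply Polynomial.funext
  intro x
  have hden : ((N:ℝ) + 1 + (m:ℝ)) - (d:ℝ) ≠ 0 := by
    have : (d:ℝ) ≤ (N:ℝ) := by exact_mod_cast hd
    have : (0:ℝ) < (N:ℝ) + 1 + m - d := by
      have hm : (0:ℝ) ≤ m := by positivity
      linarith
    linarith
  simp only [xkraw1, xkraw2, eval_mul, eval_add, eval_sub, eval_comp, eval_C, eval_X,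
    eval_one, eval_prod]
  rw [eval_kraw_factor N m p x, eval_kraw_factor N m p (x+1)]
  rw [show (-(-(N:ℝ)-2)-2) = (N:ℝ) by ring,
    show x + 1 - ((N:ℝ)+1) = x - ((N:ℝ)+1) + 1 by ring,
    show x - ((N:ℝ)+1) - (-(N:ℝ)-2+1) = x by ring,
    show x - ((N:ℝ)+1) - (-(N:ℝ)-2) = x + 1 by ring]
  have hQ1 : (∏ i ∈ Finset.range (N+1), (x - (i:ℝ)))
      = (∏ i ∈ Finset.range N, (x - (i:ℝ))) * (x - (N:ℝ)) := Finset.prod_range_succ _ _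
  have hQ2 : (∏ i ∈ Finset.range (N+1), (x + 1 - (i:ℝ)))
      = (x + 1) * ∏ i ∈ Finset.range N, (x - (i:ℝ)) := by
    rw [Finset.prod_range_succ' (fun i => x + 1 - (i:ℝ)) N]
    push_cast
    rw [sub_zero, mul_comm]
    congr 1
    exact Finset.prod_congr rfl (fun i _ => by ring)
  have hQ3 : (∏ i ∈ Finset.range N, (x - ((N:ℝ) - 1 - (i:ℝ))))
      = ∏ i ∈ Finset.range N, (x - (i:ℝ)) := by
    rw [show (∏ i ∈ Finset.range N, (x - ((N:ℝ) - 1 - (i:ℝ))))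
        = ∏ i ∈ Finset.range N, (x - ((N - 1 - i : ℕ):ℝ)) from
      Finset.prod_congr rfl (fun i hi => by
        rw [Finset.mem_range] at hi
        congr 1
        have h1 : (i:ℝ) ≤ (N:ℝ) - 1 := by
          have : i + 1 ≤ N := hi
          have := Nat.cast_le (α := ℝ).mpr this
          push_cast at this; linarith
        rw [Nat.cast_sub (by omega), Nat.cast_sub (by omega)]
        push_cast; ring)]
    exact Finset.prod_range_reflect (fun i => x - (i:ℝ)) N
  rw [hQ1, hQ2, hQ3]
  have hden2 : (-(N:ℝ) - 2 + (d:ℝ) + 1 - (m:ℝ)) ≠ 0 := by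
    intro h; apply hden; linarith
  push_cast
  field_simp
  ring
end

section
/- Let p and a be real parameters and let d, n ≥ 0 be integers with n ≠ d and n+d ≥ 1. Then the Casorati determinant K_d(x;p,a)·K_n(x+1;p,a) − K_d(x+1;p,a)·K_n(x;p,a) is a real polynomial in x of degree exactly n+d−1 whose leading coefficient (the coefficient of x^{n+d−1}) equals n−d. -/
open Polynomial

lemma poch_neg_nat_s14 (n : ℕ) : poch (-(n : ℝ)) n = (-1) ^ n * n.factorial := by
  unfold poch
  have h1 : ∀ i ∈ Finset.range n, (-(n : ℝ) + i) = (-1) * (((n - i : ℕ) : ℝ)) := by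
    intro i hi
    rw [Finset.mem_range] at hi
    rw [Nat.cast_sub hi.le]
    ring
  rw [Finset.prod_congr rfl h1, Finset.prod_mul_distrib, Finset.prod_const, Finset.card_range,
    ← Nat.cast_prod]
  have h2 : (∏ i ∈ Finset.range n, (n - i)) = n.factorial := by
    rw [← Finset.prod_range_add_one_eq_factorial n, ← Finset.prod_range_reflect]
    apply Finset.prod_congr rfl
    intro i hi
    rw [Finset.mem_range] at hi
    omega
  rw [h2]

lemma prod_lin (j : ℕ) :
    (∏ i ∈ Finset.range j, (Polynomial.C (i : ℝ) - Polynomial.X)) =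
      (-1) ^ j * ∏ i ∈ Finset.range j, (Polynomial.X - Polynomial.C (i : ℝ)) := by
  calc (∏ i ∈ Finset.range j, (Polynomial.C (i : ℝ) - Polynomial.X))
      = ∏ i ∈ Finset.range j, ((-1) * (Polynomial.X - Polynomial.C (i : ℝ))) := by
        apply Finset.prod_congr rfl; intro i _; ring
    _ = (∏ _i ∈ Finset.range j, (-1 : ℝ[X])) *
          ∏ i ∈ Finset.range j, (Polynomial.X - Polynomial.C (i : ℝ)) :=
        Finset.prod_mul_distrib
    _ = _ := by rw [Finset.prod_const, Finset.card_range]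

lemma prod_lin_natDegree_le (j : ℕ) :
    (∏ i ∈ Finset.range j, (Polynomial.C (i : ℝ) - Polynomial.X)).natDegree ≤ j := by
  refine le_trans (Polynomial.natDegree_prod_le _ _) ?_
  have h : ∀ i ∈ Finset.range j,
      (Polynomial.C (i : ℝ) - Polynomial.X).natDegree ≤ (fun _ : ℕ => 1) i := by
    intro i _
    refine le_trans (Polynomial.natDegree_sub_le _ _) ?_
    simp
  refine le_trans (Finset.sum_le_sum h) ?_
  simp

lemma prod_lin_coeff (j : ℕ) :
    (∏ i ∈ Finset.range j, (Polynomial.C (i : ℝ) - Polynomial.X)).coeff j = (-1) ^ j := by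
  rw [prod_lin]
  have hm : (∏ i ∈ Finset.range j, (Polynomial.X - Polynomial.C (i : ℝ))).Monic :=
    Polynomial.monic_prod_of_monic _ _ fun i _ => Polynomial.monic_X_sub_C _
  have hd : (∏ i ∈ Finset.range j, (Polynomial.X - Polynomial.C (i : ℝ))).natDegree = j := by
    rw [Polynomial.natDegree_prod]
    · rw [Finset.sum_congr rfl fun i (_ : i ∈ Finset.range j) =>
        Polynomial.natDegree_X_sub_C (i : ℝ)]
      simp
    · intro i _
      exact Polynomial.X_sub_C_ne_zero _
  have : (∏ i ∈ Finset.range j, (Polynomial.X - Polynomial.C (i : ℝ))).coeff j = 1 := by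
    have h := hm.coeff_natDegree
    rwa [hd] at h
  have hpow : ((-1 : ℝ[X]) ^ j) = Polynomial.C ((-1 : ℝ) ^ j) := by
    simp
  rw [hpow, Polynomial.coeff_C_mul, this, mul_one]

lemma kraw_natDegree_le (n : ℕ) (p a : ℝ) : (kraw n p a).natDegree ≤ n := by
  unfold kraw
  apply Polynomial.natDegree_sum_le_of_forall_le
  intro j hj
  rw [Finset.mem_range] at hj
  refine le_trans (Polynomial.natDegree_mul_le) ?_
  simp only [Polynomial.natDegree_C, zero_add]
  exact le_trans (prod_lin_natDegree_le j) (by omega)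

lemma kraw_coeff_self (n : ℕ) (p a : ℝ) : (kraw n p a).coeff n = 1 := by
  unfold kraw
  rw [Polynomial.finset_sum_coeff, Finset.sum_range_succ]
  have h0 : ∀ j ∈ Finset.range n,
      (Polynomial.C (poch (-(n : ℝ)) j * poch (-a + j) (n - j) / (Nat.factorial j) * p ^ (n - j)) *
        ∏ i ∈ Finset.range j, (Polynomial.C (i : ℝ) - Polynomial.X)).coeff n = 0 := by
    intro j hj
    rw [Finset.mem_range] at hj
    apply Polynomial.coeff_eq_zero_of_natDegree_lt
    refine lt_of_le_of_lt (le_trans Polynomial.natDegree_mul_le ?_) (show j < n from hj)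
    simp only [Polynomial.natDegree_C, zero_add]
    exact prod_lin_natDegree_le j
  rw [Finset.sum_eq_zero h0, zero_add, Polynomial.coeff_C_mul, prod_lin_coeff,
    Nat.sub_self, poch_neg_nat_s14]
  have : poch (-a + n) 0 = 1 := by simp [poch]
  rw [this]
  have hfac : (Nat.factorial n : ℝ) ≠ 0 := Nat.cast_ne_zero.mpr (Nat.factorial_ne_zero n)
  field_simp
  ring_nf
  rw [mul_comm n 2, pow_mul]
  norm_num

lemma kraw_monic (n : ℕ) (p a : ℝ) : (kraw n p a).Monic :=
  Polynomial.monic_of_natDegree_le_of_coeff_eq_one n (kraw_natDegree_le n p a)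
    (kraw_coeff_self n p a)

lemma kraw_natDegree (n : ℕ) (p a : ℝ) : (kraw n p a).natDegree = n :=
  le_antisymm (kraw_natDegree_le n p a)
    (Polynomial.le_natDegree_of_ne_zero (by rw [kraw_coeff_self]; norm_num))

lemma coeff_comp_X_add_one (h : ℝ[X]) (m t : ℕ) (hm : h.natDegree < m) :
    (h.comp (Polynomial.X + 1)).coeff t =
      ∑ k ∈ Finset.range m, h.coeff k * (k.choose t : ℝ) := by
  rw [Polynomial.comp_eq_sum_left,
    Polynomial.sum_over_range' _ (by intro k; simp) m hm, Polynomial.finset_sum_coeff]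
  apply Finset.sum_congr rfl
  intro k _
  rw [Polynomial.coeff_C_mul, Polynomial.coeff_X_add_one_pow]

/-- For a monic `h` of degree `m`, `h(x+1) - h(x)` has degree ≤ m-1 with coeff `m` at `m-1`. -/
lemma comp_diff (h : ℝ[X]) (m : ℕ) (hmo : h.Monic) (hd : h.natDegree = m) :
    (h.comp (Polynomial.X + 1) - h).natDegree ≤ m - 1 ∧
      (h.comp (Polynomial.X + 1) - h).coeff (m - 1) = (m : ℝ) := by
  rcases m with _ | s
  · -- h = 1
    have h1 : h = 1 := hmo.natDegree_eq_zero.mp hd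
    subst h1
    simp
  · have hcc : ∀ t, (h.comp (Polynomial.X + 1)).coeff t =
        ∑ k ∈ Finset.range (s + 2), h.coeff k * (k.choose t : ℝ) := by
      intro t
      exact coeff_comp_X_add_one h (s + 2) t (by omega)
    have hlead : h.coeff (s + 1) = 1 := by rw [← hd]; exact hmo.coeff_natDegree
    constructor
    · rw [Polynomial.natDegree_le_iff_coeff_eq_zero]
      intro t ht
      rw [Polynomial.coeff_sub, hcc]
      rcases eq_or_lt_of_le (show s + 1 ≤ t by omega) with he | hlt
      · subst he
        rw [Finset.sum_range_succ, hlead]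
        have : ∑ k ∈ Finset.range (s + 1), h.coeff k * (k.choose (s + 1) : ℝ) = 0 := by
          apply Finset.sum_eq_zero
          intro k hk
          rw [Finset.mem_range] at hk
          rw [Nat.choose_eq_zero_of_lt hk]
          simp
        rw [this]
        simp
      · have h1 : ∑ k ∈ Finset.range (s + 2), h.coeff k * (k.choose t : ℝ) = 0 := by
          apply Finset.sum_eq_zero
          intro k hk
          rw [Finset.mem_range] at hk
          rw [Nat.choose_eq_zero_of_lt (by omega)]
          simp
        have h2 : h.coeff t = 0 := Polynomial.coeff_eq_zero_of_natDegree_lt (by omega)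
        rw [h1, h2, sub_zero]
    · simp only [Nat.add_sub_cancel]
      rw [Polynomial.coeff_sub, hcc]
      rw [Finset.sum_range_succ, Finset.sum_range_succ]
      have h1 : ∑ k ∈ Finset.range s, h.coeff k * (k.choose s : ℝ) = 0 := by
        apply Finset.sum_eq_zero
        intro k hk
        rw [Finset.mem_range] at hk
        rw [Nat.choose_eq_zero_of_lt hk]
        simp
      rw [h1, hlead, Nat.choose_self, Nat.choose_succ_self_right]
      push_cast
      ring

lemma casoratian_aux (f g : ℝ[X]) (d n : ℕ) (hfm : f.Monic) (hgm : g.Monic)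
    (hfd : f.natDegree = d) (hgd : g.natDegree = n) (hnd : n ≠ d) :
    (f * g.comp (Polynomial.X + 1) - f.comp (Polynomial.X + 1) * g).natDegree = n + d - 1 ∧
    (f * g.comp (Polynomial.X + 1) - f.comp (Polynomial.X + 1) * g).coeff (n + d - 1) =
      (n : ℝ) - (d : ℝ) := by
  obtain ⟨hGdeg, hGc⟩ := comp_diff g n hgm hgd
  obtain ⟨hFdeg, hFc⟩ := comp_diff f d hfm hfd
  have hfc : f.coeff d = 1 := by have := hfm.coeff_natDegree; rwa [hfd] at this
  have hgc : g.coeff n = 1 := by have := hgm.coeff_natDegree; rwa [hgd] at this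
  have key : f * g.comp (Polynomial.X + 1) - f.comp (Polynomial.X + 1) * g
      = f * (g.comp (Polynomial.X + 1) - g)
        - (f.comp (Polynomial.X + 1) - f) * g := by ring
  have hfG : (f * (g.comp (Polynomial.X + 1) - g)).coeff (n + d - 1) = (n : ℝ) ∧
      (f * (g.comp (Polynomial.X + 1) - g)).natDegree ≤ n + d - 1 := by
    rcases Nat.eq_zero_or_pos n with hn0 | hn1
    · subst hn0
      have hG0 : g.comp (Polynomial.X + 1) - g = 0 := by
        have h2 := Polynomial.eq_C_of_natDegree_le_zero
          (le_trans hGdeg (by norm_num))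
        rw [h2]
        have h3 : (g.comp (Polynomial.X + 1) - g).coeff 0 = 0 := by simpa using hGc
        rw [h3, map_zero]
      rw [hG0, mul_zero]
      simp
    · obtain ⟨s, rfl⟩ : ∃ s, n = s + 1 := ⟨n - 1, by omega⟩
      have hidx : s + 1 + d - 1 = d + s := by omega
      rw [hidx]
      constructor
      · rw [Polynomial.coeff_mul_add_eq_of_natDegree_le hfd.le (by simpa using hGdeg), hfc, one_mul]
        simpa using hGc
      · refine le_trans Polynomial.natDegree_mul_le ?_
        have h4 : (g.comp (Polynomial.X + 1) - g).natDegree ≤ s := by simpa using hGdeg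
        omega
  have hFg : ((f.comp (Polynomial.X + 1) - f) * g).coeff (n + d - 1) = (d : ℝ) ∧
      ((f.comp (Polynomial.X + 1) - f) * g).natDegree ≤ n + d - 1 := by
    rcases Nat.eq_zero_or_pos d with hd0 | hd1
    · subst hd0
      have hF0 : f.comp (Polynomial.X + 1) - f = 0 := by
        have h2 := Polynomial.eq_C_of_natDegree_le_zero
          (le_trans hFdeg (by norm_num))
        rw [h2]
        have h3 : (f.comp (Polynomial.X + 1) - f).coeff 0 = 0 := by simpa using hFc
        rw [h3, map_zero]
      rw [hF0, zero_mul]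
      simp
    · obtain ⟨t, rfl⟩ : ∃ t, d = t + 1 := ⟨d - 1, by omega⟩
      have hidx : n + (t + 1) - 1 = t + n := by omega
      rw [hidx]
      constructor
      · rw [Polynomial.coeff_mul_add_eq_of_natDegree_le (by simpa using hFdeg) hgd.le, hgc, mul_one]
        simpa using hFc
      · refine le_trans Polynomial.natDegree_mul_le ?_
        have h4 : (f.comp (Polynomial.X + 1) - f).natDegree ≤ t := by simpa using hFdeg
        omega
  have hcoeff : (f * g.comp (Polynomial.X + 1) - f.comp (Polynomial.X + 1) * g).coeff
      (n + d - 1) = (n : ℝ) - (d : ℝ) := by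
    rw [key, Polynomial.coeff_sub, hfG.1, hFg.1]
  refine ⟨?_, hcoeff⟩
  apply le_antisymm
  · rw [key]
    exact le_trans (Polynomial.natDegree_sub_le _ _) (max_le hfG.2 hFg.2)
  · apply Polynomial.le_natDegree_of_ne_zero
    rw [hcoeff]
    intro hzero
    apply hnd
    have h5 : (n : ℝ) = (d : ℝ) := by linarith
    exact_mod_cast h5

/-- The Casorati determinant `K_d(x;p,a) K_n(x+1;p,a) − K_d(x+1;p,a) K_n(x;p,a)` has degree
exactly `n+d−1` and its leading coefficient (the coefficient of `x^{n+d−1}`) is `n−d`. -/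
theorem krawtchouk_casoratian_degree (p a : ℝ) (d n : ℕ) (hnd : n ≠ d) (h1 : 1 ≤ n + d) :
    (kraw d p a * (kraw n p a).comp (Polynomial.X + 1) -
        (kraw d p a).comp (Polynomial.X + 1) * kraw n p a).natDegree = n + d - 1 ∧
    (kraw d p a * (kraw n p a).comp (Polynomial.X + 1) -
        (kraw d p a).comp (Polynomial.X + 1) * kraw n p a).coeff (n + d - 1) =
      (n : ℝ) - (d : ℝ) :=
  casoratian_aux (kraw d p a) (kraw n p a) d n (kraw_monic d p a) (kraw_monic n p a)
    (kraw_natDegree d p a) (kraw_natDegree n p a) hnd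
end
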